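/- The line digraph of the subKautz digraph sK(d,ℓ−1) is isomorphic to the cyclic Kautz digraph CK(d,ℓ): the map sending an arc (x₁…x_{ℓ−1}, x₂…x_ℓ) of sK(d,ℓ−1) to the sequence x₁x₂…x_ℓ is a digraph isomorphism from L(sK(d,ℓ−1)) to CK(d,ℓ). -/

import Mathlib

/-- Consecutive entries are distinct (Kautz/subKautz vertex condition). -/
abbrev consecNe {m n : ℕ} (x : Fin m → Fin n) : Prop :=
  ∀ i j : Fin m, j.val = i.val + 1 → x i ≠ x j

/-- First entry distinct from last entry (cyclic Kautz vertex condition). -/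
abbrev firstNeLast {m n : ℕ} (x : Fin m → Fin n) : Prop :=
  ∀ i j : Fin m, i.val = 0 → j.val = m - 1 → x i ≠ x j

/-- Adjacency in the subKautz digraph: `y` is the left shift of `x` with a new last
symbol distinct from the first and last symbols of `x`. -/
abbrev sKAdj {m n : ℕ} (x y : Fin m → Fin n) : Prop :=
  (∀ i j : Fin m, j.val = i.val + 1 → y i = x j) ∧
  (∀ i j : Fin m, i.val = m - 1 → j.val = 0 → y i ≠ x j) ∧
  (∀ i : Fin m, i.val = m - 1 → y i ≠ x i)

/-- Adjacency in the cyclic Kautz digraph: `y` is the left shift of `x` with a new last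
symbol distinct from the second and last symbols of `x`. -/
abbrev ckAdj {m n : ℕ} (x y : Fin m → Fin n) : Prop :=
  (∀ i j : Fin m, j.val = i.val + 1 → y i = x j) ∧
  (∀ i j : Fin m, i.val = m - 1 → j.val = 1 → y i ≠ x j) ∧
  (∀ i : Fin m, i.val = m - 1 → y i ≠ x i)

/-!
An arc `(x, y)` of `sK(d, ℓ-1)` is determined by `x` and the last symbol of `y`, so it is
encoded by the word `w = x₁…x_ℓ`, with `x` the word without its last letter and `y` the word
without its first. Under this encoding the three subKautz arc conditions (`x` and `y` are
vertices, and `x_ℓ ∉ {x₁, x_{ℓ-1}}`) become exactly the cyclic Kautz vertex conditions on `w`.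
Two arcs are consecutive iff the tail of the first word is the initial part of the second,
which is the shift condition of `CK(d, ℓ)`; the two inequalities of that adjacency then come
for free from the vertex conditions on the second word.
-/

namespace SubKautz

variable {ℓ n : ℕ}

def wordDropLast (w : Fin ℓ → Fin n) : Fin (ℓ - 1) → Fin n :=
  fun i => w ⟨i.val, by omega⟩

def wordTail (w : Fin ℓ → Fin n) : Fin (ℓ - 1) → Fin n :=
  fun i => w ⟨i.val + 1, by omega⟩

def arcToWord (hℓ : 2 ≤ ℓ) (p : (Fin (ℓ - 1) → Fin n) × (Fin (ℓ - 1) → Fin n)) :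
    Fin ℓ → Fin n :=
  fun i => if h : i.val < ℓ - 1 then p.1 ⟨i.val, h⟩ else p.2 ⟨ℓ - 2, by omega⟩

-- the arcs of `sK(n - 1, ℓ - 1)`, indexed like the words of length `ℓ` encoding them
def subKautzArcs (ℓ n : ℕ) : Set ((Fin (ℓ - 1) → Fin n) × (Fin (ℓ - 1) → Fin n)) :=
  {p | consecNe p.1 ∧ consecNe p.2 ∧ sKAdj p.1 p.2}

def cyclicKautzVertices (ℓ n : ℕ) : Set (Fin ℓ → Fin n) :=
  {w | consecNe w ∧ firstNeLast w}

theorem wordDropLast_arcToWord (hℓ : 2 ≤ ℓ)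
    (p : (Fin (ℓ - 1) → Fin n) × (Fin (ℓ - 1) → Fin n)) :
    wordDropLast (arcToWord hℓ p) = p.1 := by
  funext i
  simp [wordDropLast, arcToWord]

theorem wordTail_arcToWord (hℓ : 2 ≤ ℓ)
    {p : (Fin (ℓ - 1) → Fin n) × (Fin (ℓ - 1) → Fin n)}
    (hshift : ∀ i j : Fin (ℓ - 1), j.val = i.val + 1 → p.2 i = p.1 j) :
    wordTail (arcToWord hℓ p) = p.2 := by
  funext i
  by_cases hi : i.val + 1 < ℓ - 1
  · simp only [wordTail, arcToWord, dif_pos hi]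
    exact (hshift i ⟨i.val + 1, hi⟩ rfl).symm
  · simp only [wordTail, arcToWord, dif_neg hi]
    exact congrArg p.2 (Fin.ext (by simp only; omega))

theorem arcToWord_wordDropLast_wordTail (hℓ : 2 ≤ ℓ) (w : Fin ℓ → Fin n) :
    arcToWord hℓ (wordDropLast w, wordTail w) = w := by
  funext i
  by_cases hi : i.val < ℓ - 1
  · simp [arcToWord, wordDropLast, hi]
  · simp only [arcToWord, wordTail, dif_neg hi]
    exact congrArg w (Fin.ext (by simp only; omega))

theorem wordDropLast_wordTail_mem_subKautzArcs_iff (hℓ : 2 ≤ ℓ) (w : Fin ℓ → Fin n) :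
    (wordDropLast w, wordTail w) ∈ subKautzArcs ℓ n ↔ w ∈ cyclicKautzVertices ℓ n := by
  constructor
  · rintro ⟨hinit, -, -, hfirst, hlast⟩
    refine ⟨fun i j hij => ?_, fun i j hi hj => ?_⟩
    · by_cases hj : j.val < ℓ - 1
      · exact hinit ⟨i, by omega⟩ ⟨j, hj⟩ hij
      · rw [show j = ⟨i.val + 1, by omega⟩ from Fin.ext hij]
        exact (hlast ⟨i, by omega⟩ (by simp only; omega)).symm
    · rw [show i = ⟨0, by omega⟩ from Fin.ext hi,
        show j = ⟨ℓ - 2 + 1, by omega⟩ from Fin.ext (by simp only; omega)]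
      exact (hfirst ⟨ℓ - 2, by omega⟩ ⟨0, by omega⟩ (by simp only; omega) rfl).symm
  · rintro ⟨hw, hfl⟩
    refine ⟨fun i j hij => hw _ _ hij, fun i j hij => hw _ _ (by simp only; omega),
      fun i j hij => congrArg w (Fin.ext (by simp only; omega)),
      fun i j hi hj => (hfl _ _ hj (by simp only; omega)).symm,
      fun i _ => (hw _ _ rfl).symm⟩

theorem arcToWord_bijOn (hℓ : 2 ≤ ℓ) :
    Set.BijOn (arcToWord hℓ) (subKautzArcs ℓ n) (cyclicKautzVertices ℓ n) := by
  have hleft : ∀ p ∈ subKautzArcs ℓ n,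
      (wordDropLast (arcToWord hℓ p), wordTail (arcToWord hℓ p)) = p :=
    fun p hp => Prod.ext (wordDropLast_arcToWord hℓ p) (wordTail_arcToWord hℓ hp.2.2.1)
  refine Set.InvOn.bijOn (f' := fun w => (wordDropLast w, wordTail w))
    ⟨hleft, fun w _ => arcToWord_wordDropLast_wordTail hℓ w⟩ (fun p hp => ?_)
    (fun w hw => (wordDropLast_wordTail_mem_subKautzArcs_iff hℓ w).2 hw)
  rw [← wordDropLast_wordTail_mem_subKautzArcs_iff hℓ, hleft p hp]
  exact hp

theorem ckAdj_iff_wordTail_eq_wordDropLast (hℓ : 2 ≤ ℓ) {w v : Fin ℓ → Fin n}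
    (hv : v ∈ cyclicKautzVertices ℓ n) :
    ckAdj w v ↔ wordTail w = wordDropLast v := by
  obtain ⟨hvc, hvfl⟩ := hv
  constructor
  · rintro ⟨hshift, -, -⟩
    funext i
    exact (hshift ⟨i.val, by omega⟩ ⟨i.val + 1, by omega⟩ rfl).symm
  · intro h
    have hwv : ∀ i (hi : i + 1 < ℓ), w ⟨i + 1, hi⟩ = v ⟨i, by omega⟩ :=
      fun i hi => congrFun h ⟨i, by omega⟩
    refine ⟨fun i j hij => ?_, fun i j hi hj => ?_, fun i hi => ?_⟩
    · rw [show j = ⟨i.val + 1, by omega⟩ from Fin.ext hij]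
      exact (hwv i _).symm
    · rw [show j = ⟨0 + 1, by omega⟩ from Fin.ext hj, hwv 0 (by omega)]
      exact (hvfl _ i rfl hi).symm
    · rw [show i = ⟨ℓ - 2 + 1, by omega⟩ from Fin.ext (by simp only; omega),
        hwv (ℓ - 2) (by omega)]
      exact (hvc _ _ rfl).symm

end SubKautz

open SubKautz in
theorem stmt5 (d ℓ : ℕ) (hℓ : 3 ≤ ℓ) :
    Set.BijOn
      (fun p : (Fin (ℓ - 1) → Fin (d + 1)) × (Fin (ℓ - 1) → Fin (d + 1)) =>
        fun i : Fin ℓ =>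
          if h : i.val < ℓ - 1 then p.1 ⟨i.val, h⟩ else p.2 ⟨ℓ - 2, by omega⟩)
      {p | consecNe p.1 ∧ consecNe p.2 ∧ sKAdj p.1 p.2}
      {z : Fin ℓ → Fin (d + 1) | consecNe z ∧ firstNeLast z} ∧
    ∀ p q : (Fin (ℓ - 1) → Fin (d + 1)) × (Fin (ℓ - 1) → Fin (d + 1)),
      (consecNe p.1 ∧ consecNe p.2 ∧ sKAdj p.1 p.2) →
      (consecNe q.1 ∧ consecNe q.2 ∧ sKAdj q.1 q.2) →
      (p.2 = q.1 ↔
        ckAdj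
          (fun i : Fin ℓ =>
            if h : i.val < ℓ - 1 then p.1 ⟨i.val, h⟩ else p.2 ⟨ℓ - 2, by omega⟩)
          (fun i : Fin ℓ =>
            if h : i.val < ℓ - 1 then q.1 ⟨i.val, h⟩ else q.2 ⟨ℓ - 2, by omega⟩)) := by
  have hℓ' : 2 ≤ ℓ := by omega
  change Set.BijOn (arcToWord hℓ') (subKautzArcs ℓ (d + 1)) (cyclicKautzVertices ℓ (d + 1)) ∧
    ∀ p q, p ∈ subKautzArcs ℓ (d + 1) → q ∈ subKautzArcs ℓ (d + 1) →
      (p.2 = q.1 ↔ ckAdj (arcToWord hℓ' p) (arcToWord hℓ' q))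
  refine ⟨arcToWord_bijOn hℓ', fun p q hp hq => ?_⟩
  rw [ckAdj_iff_wordTail_eq_wordDropLast hℓ' ((arcToWord_bijOn hℓ').mapsTo hq),
    wordTail_arcToWord hℓ' hp.2.2.1, wordDropLast_arcToWord]
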